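/- arXiv:2510.01567 — 3 statements merged into one kernel-verified Lean document; each statement's English description precedes it below -/
import Mathlib

section
/- Let m, n, C, c be positive integers, A ∈ ℝ^{m×C}, B ∈ ℝ^{C×n}, and let p : {1,…,C} → ℝ satisfy p_k > 0 for all k and Σ_k p_k = 1. For a tuple of indices k = (k₁,…,k_c) ∈ {1,…,C}^c define the Monte Carlo estimator X(k) = (1/c)·Σ_{i=1}^c p_{k_i}⁻¹ · A_{:,k_i} B_{k_i,:} (a sum of scaled rank-one outer products of the k_i-th column of A with the k_i-th row of B). Then, averaging over i.i.d. draws of the indices from p: (i) Σ_{k ∈ {1,…,C}^c} (∏_{i=1}^c p_{k_i}) · X(k) = A·B (the estimator is unbiased), and (ii) Σ_{k ∈ {1,…,C}^c} (∏_{i=1}^c p_{k_i}) · ‖A·B − X(k)‖_F² = (1/c)·( Σ_{j=1}^C p_j⁻¹ ‖A_{:,j}‖² ‖B_{j,:}‖² − ‖A·B‖_F² ). -/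
open Matrix Finset

lemma E_prod' {c C : ℕ} (p : Fin C → ℝ) (F : Fin c → Fin C → ℝ) :
    ∑ k : Fin c → Fin C, ∏ i, (p (k i) * F i (k i)) = ∏ i, ∑ j, p j * F i j := by
  rw [Finset.prod_univ_sum, Fintype.piFinset_univ]

lemma E_one' {c C : ℕ} (p : Fin C → ℝ) (hp1 : ∑ k, p k = 1) :
    ∑ k : Fin c → Fin C, (∏ i, p (k i)) = 1 := by
  have h := E_prod' p (fun (_ : Fin c) (_ : Fin C) => (1:ℝ))
  simpa [hp1] using h

lemma E_single' {c C : ℕ} (p : Fin C → ℝ) (hp1 : ∑ k, p k = 1) (i : Fin c)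
    (g : Fin C → ℝ) :
    ∑ k : Fin c → Fin C, (∏ i', p (k i')) * g (k i) = ∑ j, p j * g j := by
  have h := E_prod' p (fun i' j => if i' = i then g j else 1)
  have hl : ∀ k : Fin c → Fin C,
      (∏ i', p (k i') * (if i' = i then g (k i') else 1))
        = (∏ i', p (k i')) * g (k i) := by
    intro k
    rw [Finset.prod_mul_distrib]
    congr 1
    simp
  have hr : (∏ i', ∑ j, p j * (if i' = i then g j else 1)) = ∑ j, p j * g j := by
    rw [Finset.prod_eq_single i]
    · simp
    · intro b _ hb; simp [hb, hp1]
    · simp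
  simp only [hl] at h
  rw [h, hr]

lemma E_pair' {c C : ℕ} (p : Fin C → ℝ) (hp1 : ∑ k, p k = 1) {i i' : Fin c}
    (hii : i ≠ i') (g h : Fin C → ℝ) :
    ∑ k : Fin c → Fin C, (∏ i'', p (k i'')) * (g (k i) * h (k i'))
      = (∑ j, p j * g j) * (∑ j, p j * h j) := by
  have hE := E_prod' p
    (fun i'' j => if i'' = i then g j else if i'' = i' then h j else 1)
  have hmem : i' ∈ (Finset.univ.erase i : Finset (Fin c)) := by
    simp [hii.symm]
  have hl : ∀ k : Fin c → Fin C,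
      (∏ i'', p (k i'') * (if i'' = i then g (k i'') else if i'' = i' then h (k i'') else 1))
        = (∏ i'', p (k i'')) * (g (k i) * h (k i')) := by
    intro k
    rw [Finset.prod_mul_distrib]
    congr 1
    rw [← Finset.mul_prod_erase Finset.univ _ (Finset.mem_univ i)]
    rw [← Finset.mul_prod_erase _ _ hmem]
    rw [Finset.prod_eq_one]
    · simp [hii.symm, Ne.symm hii]
    · intro x hx
      simp only [Finset.mem_erase] at hx
      simp [hx.1, hx.2.1]
  have hr : (∏ i'', ∑ j, p j * (if i'' = i then g j else if i'' = i' then h j else 1))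
      = (∑ j, p j * g j) * (∑ j, p j * h j) := by
    rw [← Finset.mul_prod_erase Finset.univ _ (Finset.mem_univ i)]
    rw [← Finset.mul_prod_erase _ _ hmem]
    rw [Finset.prod_eq_one]
    · simp [Ne.symm hii]
    · intro x hx
      simp only [Finset.mem_erase] at hx
      simp [hx.1, hx.2.1, hp1]
  simp only [hl] at hE
  rw [hE, hr]

/-- the importance-sampled Monte Carlo rank-one estimator of a
matrix product is unbiased, and its expected squared Frobenius error equals
`(1/c)(Σ_j p_j⁻¹‖A_{:,j}‖²‖B_{j,:}‖² − ‖AB‖_F²)`. -/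
theorem stmt_11 (m n C c : ℕ) (hm : 0 < m) (hn : 0 < n) (hC : 0 < C)
    (hc : 0 < c)
    (A : Matrix (Fin m) (Fin C) ℝ) (B : Matrix (Fin C) (Fin n) ℝ)
    (p : Fin C → ℝ) (hp : ∀ k, 0 < p k) (hp1 : ∑ k, p k = 1)
    (X : (Fin c → Fin C) → Matrix (Fin m) (Fin n) ℝ)
    (hX : X = fun k => (c : ℝ)⁻¹ •
      ∑ i, (p (k i))⁻¹ • vecMulVec (fun r => A r (k i)) (fun s => B (k i) s)) :
    (∑ k : Fin c → Fin C, (∏ i, p (k i)) • X k = A * B) ∧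
      ∑ k : Fin c → Fin C, (∏ i, p (k i)) *
          (∑ r, ∑ s, ((A * B) r s - X k r s) ^ 2)
        = (c : ℝ)⁻¹ *
            ((∑ j, (p j)⁻¹ * (∑ r, (A r j) ^ 2) * (∑ s, (B j s) ^ 2))
              - ∑ r, ∑ s, ((A * B) r s) ^ 2) := by
  have hcne : (c : ℝ) ≠ 0 := Nat.cast_ne_zero.mpr hc.ne'
  set g : Fin m → Fin n → Fin C → ℝ :=
    fun r s j => (p j)⁻¹ * (A r j * B j s) with hgdef
  have hXe : ∀ (k : Fin c → Fin C) r s,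
      X k r s = (c : ℝ)⁻¹ * ∑ i, g r s (k i) := by
    intro k r s
    rw [hX]
    simp [Matrix.sum_apply, vecMulVec_apply, hgdef]
  have hg1 : ∀ r s, ∑ j, p j * g r s j = (A * B) r s := by
    intro r s
    rw [Matrix.mul_apply]
    refine Finset.sum_congr rfl fun j _ => ?_
    rw [hgdef, mul_inv_cancel_left₀ (hp j).ne']
  have E1 : ∀ r s, ∑ k : Fin c → Fin C,
      (∏ i, p (k i)) * ((c : ℝ)⁻¹ * ∑ i, g r s (k i)) = (A * B) r s := by
    intro r s
    calc ∑ k : Fin c → Fin C, (∏ i, p (k i)) * ((c : ℝ)⁻¹ * ∑ i, g r s (k i))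
        = ∑ k : Fin c → Fin C, ∑ i : Fin c,
            (c : ℝ)⁻¹ * ((∏ i', p (k i')) * g r s (k i)) := by
          refine Finset.sum_congr rfl fun k _ => ?_
          rw [Finset.mul_sum, Finset.mul_sum]
          exact Finset.sum_congr rfl fun i _ => by ring
      _ = ∑ i : Fin c, (c : ℝ)⁻¹ *
            ∑ k : Fin c → Fin C, (∏ i', p (k i')) * g r s (k i) := by
          rw [Finset.sum_comm]
          exact Finset.sum_congr rfl fun i _ => (Finset.mul_sum _ _ _).symm
      _ = ∑ i : Fin c, (c : ℝ)⁻¹ * (A * B) r s := by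
          refine Finset.sum_congr rfl fun i _ => ?_
          rw [E_single' p hp1, hg1]
      _ = (A * B) r s := by
          rw [Finset.sum_const, Finset.card_univ, Fintype.card_fin,
            nsmul_eq_mul]
          field_simp
  have E2 : ∀ r s, ∑ k : Fin c → Fin C,
      (∏ i, p (k i)) * ((c : ℝ)⁻¹ * ∑ i, g r s (k i)) ^ 2
        = (c : ℝ)⁻¹ * (∑ j, p j * (g r s j) ^ 2)
          + (1 - (c : ℝ)⁻¹) * ((A * B) r s) ^ 2 := by
    intro r s
    have step1 : ∀ k : Fin c → Fin C,
        (∏ i, p (k i)) * ((c : ℝ)⁻¹ * ∑ i, g r s (k i)) ^ 2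
          = ∑ i : Fin c, ∑ i' : Fin c,
              ((c : ℝ)⁻¹) ^ 2 * ((∏ i'', p (k i'')) * (g r s (k i) * g r s (k i'))) := by
      intro k
      rw [mul_pow, sq (∑ i, g r s (k i)), Finset.sum_mul_sum]
      rw [Finset.mul_sum, Finset.mul_sum]
      refine Finset.sum_congr rfl fun i _ => ?_
      rw [Finset.mul_sum, Finset.mul_sum]
      exact Finset.sum_congr rfl fun i' _ => by ring
    have step2 : ∀ i : Fin c,
        ∑ i' : Fin c, ((c : ℝ)⁻¹) ^ 2 *
            ∑ k : Fin c → Fin C, (∏ i'', p (k i'')) * (g r s (k i) * g r s (k i'))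
          = ((c : ℝ)⁻¹) ^ 2 * (∑ j, p j * (g r s j) ^ 2)
            + ((c : ℝ) - 1) * (((c : ℝ)⁻¹) ^ 2 * ((A * B) r s) ^ 2) := by
      intro i
      rw [← Finset.add_sum_erase _ _ (Finset.mem_univ i)]
      have hdiag : ∑ k : Fin c → Fin C,
          (∏ i'', p (k i'')) * (g r s (k i) * g r s (k i))
            = ∑ j, p j * (g r s j) ^ 2 := by
        have := E_single' p hp1 i (fun j => g r s j * g r s j)
        simpa [sq] using this
      have hoff : ∀ i' ∈ Finset.univ.erase i,
          ((c : ℝ)⁻¹) ^ 2 * ∑ k : Fin c → Fin C,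
              (∏ i'', p (k i'')) * (g r s (k i) * g r s (k i'))
            = ((c : ℝ)⁻¹) ^ 2 * ((A * B) r s) ^ 2 := by
        intro i' hi'
        have hne : i ≠ i' := (Finset.mem_erase.mp hi').1.symm.symm.symm
        rw [E_pair' p hp1 (Ne.symm (Finset.mem_erase.mp hi').1) (g r s) (g r s)]
        rw [hg1]; ring
      rw [hdiag, Finset.sum_congr rfl hoff, Finset.sum_const,
        Finset.card_erase_of_mem (Finset.mem_univ i), Finset.card_univ,
        Fintype.card_fin, nsmul_eq_mul, Nat.cast_sub hc, Nat.cast_one]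
    calc ∑ k : Fin c → Fin C, (∏ i, p (k i)) * ((c : ℝ)⁻¹ * ∑ i, g r s (k i)) ^ 2
        = ∑ k : Fin c → Fin C, ∑ i : Fin c, ∑ i' : Fin c,
            ((c : ℝ)⁻¹) ^ 2 * ((∏ i'', p (k i'')) * (g r s (k i) * g r s (k i'))) :=
          Finset.sum_congr rfl fun k _ => step1 k
      _ = ∑ i : Fin c, ∑ i' : Fin c, ((c : ℝ)⁻¹) ^ 2 *
            ∑ k : Fin c → Fin C, (∏ i'', p (k i'')) * (g r s (k i) * g r s (k i')) := by
          rw [Finset.sum_comm]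
          refine Finset.sum_congr rfl fun i _ => ?_
          rw [Finset.sum_comm]
          refine Finset.sum_congr rfl fun i' _ => ?_
          exact (Finset.mul_sum _ _ _).symm
      _ = ∑ i : Fin c, (((c : ℝ)⁻¹) ^ 2 * (∑ j, p j * (g r s j) ^ 2)
            + ((c : ℝ) - 1) * (((c : ℝ)⁻¹) ^ 2 * ((A * B) r s) ^ 2)) :=
          Finset.sum_congr rfl fun i _ => step2 i
      _ = (c : ℝ)⁻¹ * (∑ j, p j * (g r s j) ^ 2)
            + (1 - (c : ℝ)⁻¹) * ((A * B) r s) ^ 2 := by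
          rw [Finset.sum_const, Finset.card_univ, Fintype.card_fin, nsmul_eq_mul]
          field_simp
  have Tentry : ∀ r s, ∑ k : Fin c → Fin C,
      (∏ i, p (k i)) * ((A * B) r s - (c : ℝ)⁻¹ * ∑ i, g r s (k i)) ^ 2
        = (c : ℝ)⁻¹ * ((∑ j, p j * (g r s j) ^ 2) - ((A * B) r s) ^ 2) := by
    intro r s
    have expand : ∀ k : Fin c → Fin C,
        (∏ i, p (k i)) * ((A * B) r s - (c : ℝ)⁻¹ * ∑ i, g r s (k i)) ^ 2
          = (∏ i, p (k i)) * ((A * B) r s) ^ 2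
            - 2 * (A * B) r s * ((∏ i, p (k i)) * ((c : ℝ)⁻¹ * ∑ i, g r s (k i)))
            + (∏ i, p (k i)) * ((c : ℝ)⁻¹ * ∑ i, g r s (k i)) ^ 2 := by
      intro k; ring
    simp_rw [expand]
    rw [Finset.sum_add_distrib, Finset.sum_sub_distrib, ← Finset.sum_mul,
      E_one' p hp1, ← Finset.mul_sum, E1 r s, E2 r s]
    ring
  constructor
  · ext r s
    rw [Matrix.sum_apply]
    have : ∀ k : Fin c → Fin C, ((∏ i, p (k i)) • X k) r s
        = (∏ i, p (k i)) * ((c : ℝ)⁻¹ * ∑ i, g r s (k i)) := by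
      intro k
      rw [Matrix.smul_apply, hXe k r s, smul_eq_mul]
    rw [Finset.sum_congr rfl fun k _ => this k, E1 r s]
  · have hswap : ∑ k : Fin c → Fin C, (∏ i, p (k i)) *
        (∑ r, ∑ s, ((A * B) r s - X k r s) ^ 2)
          = ∑ r, ∑ s, (c : ℝ)⁻¹ * ((∑ j, p j * (g r s j) ^ 2) - ((A * B) r s) ^ 2) := by
      calc ∑ k : Fin c → Fin C, (∏ i, p (k i)) *
            (∑ r, ∑ s, ((A * B) r s - X k r s) ^ 2)
          = ∑ k : Fin c → Fin C, ∑ r, ∑ s,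
              (∏ i, p (k i)) * ((A * B) r s - (c : ℝ)⁻¹ * ∑ i, g r s (k i)) ^ 2 := by
            refine Finset.sum_congr rfl fun k _ => ?_
            rw [Finset.mul_sum]
            refine Finset.sum_congr rfl fun r _ => ?_
            rw [Finset.mul_sum]
            refine Finset.sum_congr rfl fun s _ => ?_
            rw [hXe k r s]
        _ = ∑ r, ∑ s, ∑ k : Fin c → Fin C,
              (∏ i, p (k i)) * ((A * B) r s - (c : ℝ)⁻¹ * ∑ i, g r s (k i)) ^ 2 := by
            rw [Finset.sum_comm]
            refine Finset.sum_congr rfl fun r _ => ?_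
            rw [Finset.sum_comm]
        _ = ∑ r, ∑ s, (c : ℝ)⁻¹ * ((∑ j, p j * (g r s j) ^ 2) - ((A * B) r s) ^ 2) := by
            refine Finset.sum_congr rfl fun r _ => Finset.sum_congr rfl fun s _ => ?_
            exact Tentry r s
    rw [hswap]
    have hS : ∀ r s, ∑ j, p j * (g r s j) ^ 2
        = ∑ j, (p j)⁻¹ * ((A r j) ^ 2 * (B j s) ^ 2) := by
      intro r s
      refine Finset.sum_congr rfl fun j _ => ?_
      rw [hgdef]
      have hpj : p j ≠ 0 := (hp j).ne'
      field_simp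
    have h3 : ∑ r, ∑ s, ∑ j, (p j)⁻¹ * ((A r j) ^ 2 * (B j s) ^ 2)
        = ∑ j, (p j)⁻¹ * (∑ r, (A r j) ^ 2) * (∑ s, (B j s) ^ 2) := by
      calc ∑ r, ∑ s, ∑ j, (p j)⁻¹ * ((A r j) ^ 2 * (B j s) ^ 2)
          = ∑ r, ∑ j, ∑ s, (p j)⁻¹ * ((A r j) ^ 2 * (B j s) ^ 2) :=
            Finset.sum_congr rfl fun r _ => Finset.sum_comm
        _ = ∑ j, ∑ r, ∑ s, (p j)⁻¹ * ((A r j) ^ 2 * (B j s) ^ 2) := Finset.sum_comm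
        _ = ∑ j, (p j)⁻¹ * (∑ r, (A r j) ^ 2) * (∑ s, (B j s) ^ 2) := by
            refine Finset.sum_congr rfl fun j _ => ?_
            rw [mul_assoc, Finset.sum_mul_sum]
            simp only [Finset.mul_sum]
    calc ∑ r, ∑ s, (c : ℝ)⁻¹ * (∑ j, p j * (g r s j) ^ 2 - ((A * B) r s) ^ 2)
        = (c : ℝ)⁻¹ * ((∑ r, ∑ s, ∑ j, (p j)⁻¹ * ((A r j) ^ 2 * (B j s) ^ 2))
            - ∑ r, ∑ s, ((A * B) r s) ^ 2) := by
          rw [mul_sub, Finset.mul_sum, Finset.mul_sum, ← Finset.sum_sub_distrib]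
          refine Finset.sum_congr rfl fun r _ => ?_
          rw [Finset.mul_sum, Finset.mul_sum, ← Finset.sum_sub_distrib]
          refine Finset.sum_congr rfl fun s _ => ?_
          rw [hS r s, mul_sub]
      _ = (c : ℝ)⁻¹ *
            ((∑ j, (p j)⁻¹ * (∑ r, (A r j) ^ 2) * (∑ s, (B j s) ^ 2))
              - ∑ r, ∑ s, ((A * B) r s) ^ 2) := by rw [h3]
end

section
/- Let m, n, C be positive integers, A ∈ ℝ^{m×C}, B ∈ ℝ^{C×n}, and set a_k = ‖A_{:,k}‖·‖B_{k,:}‖ for k = 1,…,C. Then for every probability vector p (p_k > 0 for all k, Σ_k p_k = 1) one has Σ_{k=1}^C a_k²/p_k ≥ (Σ_{k=1}^C a_k)²; moreover, if a_k > 0 for every k, then equality holds for the importance-sampling distribution p_k = a_k / (Σ_{j=1}^C a_j), so sampling rank-one terms with probability proportional to ‖A_{:,k}‖‖B_{k,:}‖ minimizes the expected squared Frobenius error of the randomized matrix–matrix product estimator. -/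
open Matrix Finset

/-- with `a_k = ‖A_{:,k}‖·‖B_{k,:}‖`, for every probability
vector `p` one has `Σ_k a_k²/p_k ≥ (Σ_k a_k)²`, with equality for the
importance-sampling distribution `p_k = a_k/Σ_j a_j` (when all `a_k > 0`). -/
theorem stmt_12 (m n C : ℕ) (hm : 0 < m) (hn : 0 < n) (hC : 0 < C)
    (A : Matrix (Fin m) (Fin C) ℝ) (B : Matrix (Fin C) (Fin n) ℝ)
    (a : Fin C → ℝ)
    (ha : a = fun k =>
      Real.sqrt (∑ r, (A r k) ^ 2) * Real.sqrt (∑ s, (B k s) ^ 2)) :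
    (∀ p : Fin C → ℝ, (∀ k, 0 < p k) → (∑ k, p k = 1) →
        (∑ k, a k) ^ 2 ≤ ∑ k, (a k) ^ 2 / p k) ∧
      ((∀ k, 0 < a k) →
        ∑ k, (a k) ^ 2 / (a k / ∑ j, a j) = (∑ k, a k) ^ 2) := by
  constructor
  · intro p hp hsum
    have key := Finset.sum_mul_sq_le_sq_mul_sq Finset.univ
      (fun k => Real.sqrt (p k)) (fun k => a k / Real.sqrt (p k))
    have h1 : ∀ k : Fin C, Real.sqrt (p k) * (a k / Real.sqrt (p k)) = a k := by
      intro k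
      have : Real.sqrt (p k) ≠ 0 := Real.sqrt_ne_zero'.mpr (hp k)
      field_simp
    have h2 : ∀ k : Fin C, Real.sqrt (p k) ^ 2 = p k := fun k =>
      Real.sq_sqrt (hp k).le
    have h3 : ∀ k : Fin C, (a k / Real.sqrt (p k)) ^ 2 = a k ^ 2 / p k := by
      intro k
      rw [div_pow, h2]
    simp only [h1, h2, h3, hsum, one_mul] at key
    exact key
  · intro hpos
    have hS : 0 < ∑ j, a j := Finset.sum_pos (fun j _ => hpos j) ⟨⟨0, hC⟩, Finset.mem_univ _⟩
    have h : ∀ k : Fin C, (a k) ^ 2 / (a k / ∑ j, a j) = a k * ∑ j, a j := by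
      intro k
      have hk : a k ≠ 0 := (hpos k).ne'
      field_simp
    rw [Finset.sum_congr rfl (fun k _ => h k), ← Finset.sum_mul, sq]
end

section
/- Let n and m be positive integers, let K ⊂ ℝ^n be compact, and let F : ℝ^n → ℝ^m be continuously differentiable. Assume F is injective on K and that the derivative DF(x) : ℝ^n → ℝ^m is an injective linear map for every x ∈ K. Then F satisfies a Lipschitz stability estimate on K: there exists a constant C > 0 such that for all x, y ∈ K, ‖x − y‖ ≤ C · ‖F(x) − F(y)‖. -/
/-!
Near a diagonal point `(x, x)` with `x ∈ K`, strict differentiability and injectivity of `DF(x)`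
give `F x₁ - F x₂ = DF(x)(x₁ - x₂) + o(x₁ - x₂)`, hence `x₁ - x₂ = O(F x₁ - F x₂)`. Near an
off-diagonal point `(x, y)` of `K × K`, injectivity of `F` on `K` makes `F x - F y ≠ 0`, so the
same bound holds by continuity. Compactness of `K × K` turns these local bounds into one constant.
-/

open Asymptotics Filter Topology

theorem IsCompact.isBigO_principal_of_forall_nhds {X E G : Type*} [TopologicalSpace X] [Norm E]
    [SeminormedAddCommGroup G] {S : Set X} {f : X → E} {g : X → G} (hS : IsCompact S)
    (h : ∀ x ∈ S, f =O[𝓝 x] g) : f =O[𝓟 S] g := by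
  refine hS.induction_on (by simp) (fun s t hst ht ↦ ht.mono (principal_mono.2 hst))
    (fun s t hs ht ↦ by simpa using hs.sup ht) fun x hx ↦ ?_
  obtain ⟨c, hc⟩ := (h x hx).bound
  exact ⟨_, mem_nhdsWithin_of_mem_nhds hc, isBigO_principal.2 ⟨c, fun y hy ↦ hy⟩⟩

theorem ContinuousAt.isBigO_of_ne_zero {X E G : Type*} [TopologicalSpace X]
    [SeminormedAddCommGroup E] [NormedAddCommGroup G] {f : X → E} {g : X → G} {x : X}
    (hf : ContinuousAt f x) (hg : ContinuousAt g x) (hgx : g x ≠ 0) : f =O[𝓝 x] g := by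
  refine (hf.tendsto.isBigO_one ℝ).trans ((isBigO_const_left_iff_pos_le_norm one_ne_zero).2
    ⟨‖g x‖ / 2, by positivity, ?_⟩)
  exact hg.norm.eventually (le_mem_nhds (by linarith [norm_pos_iff.2 hgx]))

theorem HasStrictFDerivAt.isBigO_sub_rev_of_injective {𝕜 E G : Type*} [NontriviallyNormedField 𝕜]
    [CompleteSpace 𝕜] [NormedAddCommGroup E] [NormedSpace 𝕜 E] [FiniteDimensional 𝕜 E]
    [NormedAddCommGroup G] [NormedSpace 𝕜 G] {f : E → G} {f' : E →L[𝕜] G} {x : E}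
    (hf : HasStrictFDerivAt f f' x) (hf' : Function.Injective f') :
    (fun p : E × E ↦ p.1 - p.2) =O[𝓝 (x, x)] fun p ↦ f p.1 - f p.2 :=
  (hf.isTheta_sub (LinearMap.isClosedEmbedding_of_injective
    (f := (f' : E →ₗ[𝕜] G)) (LinearMap.ker_eq_bot.2 hf')).isInducing).isBigO_symm

theorem stmt_19_general (n m : ℕ)
    (K : Set (EuclideanSpace ℝ (Fin n))) (hK : IsCompact K)
    (F : EuclideanSpace ℝ (Fin n) → EuclideanSpace ℝ (Fin m))
    (hF : ContDiff ℝ 1 F) (hinj : Set.InjOn F K)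
    (hDF : ∀ x ∈ K, Function.Injective (fderiv ℝ F x)) :
    ∃ C : ℝ, 0 < C ∧ ∀ x ∈ K, ∀ y ∈ K, ‖x - y‖ ≤ C * ‖F x - F y‖ := by
  have hloc : ∀ p ∈ K ×ˢ K, (fun q : _ × _ ↦ q.1 - q.2) =O[𝓝 p] fun q ↦ F q.1 - F q.2 := by
    rintro ⟨x, y⟩ ⟨hx, hy⟩
    rcases eq_or_ne x y with rfl | hxy
    · exact (hF.contDiffAt.hasStrictFDerivAt one_ne_zero).isBigO_sub_rev_of_injective (hDF x hx)
    · have hFc := hF.continuous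
      exact ContinuousAt.isBigO_of_ne_zero (by fun_prop) (by fun_prop)
        (sub_ne_zero.2 (hinj.ne hx hy hxy))
  obtain ⟨c, hc⟩ := isBigO_principal.1 ((hK.prod hK).isBigO_principal_of_forall_nhds hloc)
  refine ⟨max c 1, by positivity, fun x hx y hy ↦ (hc (x, y) ⟨hx, hy⟩).trans ?_⟩
  exact mul_le_mul_of_nonneg_right (le_max_left c 1) (norm_nonneg _)

/-- finite-dimensional stability principle: a continuously
differentiable map that is injective on a compact set `K` and whose Fréchet
derivative is injective at every point of `K` satisfies a Lipschitz stability
estimate `‖x − y‖ ≤ C‖F(x) − F(y)‖` on `K`. -/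
theorem stmt_19 (n m : ℕ) (hn : 0 < n) (hm : 0 < m)
    (K : Set (EuclideanSpace ℝ (Fin n))) (hK : IsCompact K)
    (F : EuclideanSpace ℝ (Fin n) → EuclideanSpace ℝ (Fin m))
    (hF : ContDiff ℝ 1 F) (hinj : Set.InjOn F K)
    (hDF : ∀ x ∈ K, Function.Injective (fderiv ℝ F x)) :
    ∃ C : ℝ, 0 < C ∧ ∀ x ∈ K, ∀ y ∈ K, ‖x - y‖ ≤ C * ‖F x - F y‖ :=
  stmt_19_general n m K hK F hF hinj hDF
end
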